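/- Fix d ≥ 4, 1 ≤ m < 2d−1, n̲ = (n₂,…,n_m) and n̲' = (n₂,…,n_m,n_{m+1}), all entries ≥ 2. Then the polynomials satisfy p_{d,n̲'}(X) = (X^{n_{m+1}}+1)·p_{d,n̲}(X) + X·∏_{j=2}^{m}(X^{n_j}+1), and consequently the largest real root of p_{d,n̲'} is strictly smaller than the largest real root of p_{d,n̲}. -/

import Mathlib

/-!
Adding the factor `X^{n_{m+1}} + 1` to the tuple multiplies the old product by it and contributes
one new summand `X·∏_{j ≤ m}(X^{n_j}+1)`, which gives the recursion. Both polynomials are negative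
at `0` and positive for `x ≥ d + 1`. At the largest root `λ' > 0` of `p_{d,n̲'}` the recursion
forces `p_{d,n̲}(λ') < 0`, so by the intermediate value theorem `p_{d,n̲}` has a root beyond `λ'`.
-/

/-- The auxiliary polynomial `p_{d,n̲}` of the paper, evaluated at a real `x`. -/
def pPoly (d m : ℕ) (n : ℕ → ℕ) (x : ℝ) : ℝ :=
  (x^2 - ((d : ℝ) - 1) * x - 1) * ∏ i ∈ Finset.Icc 2 m, (x^(n i) + 1)
    + x * ∑ i ∈ Finset.Icc 2 m, ∏ j ∈ (Finset.Icc 2 m).erase i, (x^(n j) + 1)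

open Finset

lemma lt_of_isGreatest_zeros {f : ℝ → ℝ} (hf : Continuous f) {a B l : ℝ} (ha : f a < 0)
    (hB : ∀ x, B ≤ x → 0 < f x) (hl : IsGreatest {x | f x = 0} l) : a < l := by
  obtain ⟨c, hc, hfc⟩ := intermediate_value_Ioo (le_max_left a B) hf.continuousOn
    ⟨ha, hB _ (le_max_right a B)⟩
  exact hc.1.trans_le (hl.2 hfc)

section

variable (d m : ℕ) (n : ℕ → ℕ)

lemma continuous_pPoly : Continuous (pPoly d m n) := by
  unfold pPoly
  fun_prop

lemma pPoly_zero_neg : pPoly d m n 0 < 0 := by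
  have h : pPoly d m n 0 = -∏ i ∈ Icc 2 m, ((0 : ℝ) ^ n i + 1) := by simp [pPoly]
  rw [h, neg_lt_zero]
  exact prod_pos fun i _ => by positivity

lemma pPoly_pos {x : ℝ} (hx : (d : ℝ) + 1 ≤ x) : 0 < pPoly d m n x := by
  have hx0 : 0 < x := by linarith [(Nat.cast_nonneg d : (0 : ℝ) ≤ d)]
  have hquad : 0 < x^2 - ((d : ℝ) - 1) * x - 1 := by nlinarith
  have hprod : 0 < ∏ i ∈ Icc 2 m, (x ^ n i + 1) := prod_pos fun i _ => by positivity
  have hsum : 0 ≤ ∑ i ∈ Icc 2 m, ∏ j ∈ (Icc 2 m).erase i, (x ^ n j + 1) :=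
    sum_nonneg fun i _ => (prod_pos fun j _ => by positivity).le
  unfold pPoly
  positivity

lemma pPoly_succ (hm : 1 ≤ m) (x : ℝ) :
    pPoly d (m+1) n x
      = (x^(n (m+1)) + 1) * pPoly d m n x + x * ∏ j ∈ Finset.Icc 2 m, (x^(n j) + 1) := by
  have hnot : m + 1 ∉ Icc 2 m := by simp
  have herase : ∀ i ∈ Icc 2 m, ∏ j ∈ (insert (m+1) (Icc 2 m)).erase i, (x ^ n j + 1)
      = (x ^ n (m+1) + 1) * ∏ j ∈ (Icc 2 m).erase i, (x ^ n j + 1) := by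
    intro i hi
    rw [erase_insert_of_ne (ne_of_mem_of_not_mem hi hnot).symm,
      prod_insert fun h => hnot (mem_of_mem_erase h)]
  rw [pPoly, pPoly, ← insert_Icc_right_eq_Icc_add_one (by omega), prod_insert hnot,
    sum_insert hnot, erase_insert hnot, sum_congr rfl herase, ← mul_sum]
  ring

lemma pPoly_neg_of_pPoly_succ_eq_zero (hm : 1 ≤ m) {x : ℝ} (hx : 0 < x)
    (hroot : pPoly d (m+1) n x = 0) : pPoly d m n x < 0 := by
  have hprod : 0 < ∏ j ∈ Icc 2 m, (x ^ n j + 1) := prod_pos fun j _ => by positivity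
  have hfac : 0 < x ^ n (m+1) + 1 := by positivity
  rw [pPoly_succ d m n hm] at hroot
  nlinarith [mul_pos hx hprod]

end

theorem stmt4_general (d m : ℕ) (hm1 : 1 ≤ m)
    (n : ℕ → ℕ)
    (lam lam' : ℝ)
    (hlam : IsGreatest {x : ℝ | pPoly d m n x = 0} lam)
    (hlam' : IsGreatest {x : ℝ | pPoly d (m+1) n x = 0} lam') :
    (∀ x : ℝ, pPoly d (m+1) n x
        = (x^(n (m+1)) + 1) * pPoly d m n x + x * ∏ j ∈ Finset.Icc 2 m, (x^(n j) + 1)) ∧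
    lam' < lam := by
  refine ⟨pPoly_succ d m n hm1, ?_⟩
  have hlam'_pos : 0 < lam' :=
    lt_of_isGreatest_zeros (continuous_pPoly d (m+1) n) (pPoly_zero_neg d (m+1) n)
      (fun _ => pPoly_pos d (m+1) n) hlam'
  exact lt_of_isGreatest_zeros (continuous_pPoly d m n)
    (pPoly_neg_of_pPoly_succ_eq_zero d m n hm1 hlam'_pos hlam'.1) (fun _ => pPoly_pos d m n) hlam

/-- For the extended tuple `n̲' = (n₂,…,n_m,n_{m+1})` one has
`p_{d,n̲'}(X) = (X^{n_{m+1}}+1)·p_{d,n̲}(X) + X·∏_{j=2}^{m}(X^{n_j}+1)`, and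
consequently the largest real root of `p_{d,n̲'}` is strictly smaller than the
largest real root of `p_{d,n̲}`. -/
theorem stmt4 (d m : ℕ) (hd : 4 ≤ d) (hm1 : 1 ≤ m) (hm2 : m < 2*d - 1)
    (n : ℕ → ℕ) (hn : ∀ i ∈ Finset.Icc 2 (m+1), 2 ≤ n i)
    (lam lam' : ℝ)
    (hlam : IsGreatest {x : ℝ | pPoly d m n x = 0} lam)
    (hlam' : IsGreatest {x : ℝ | pPoly d (m+1) n x = 0} lam') :
    (∀ x : ℝ, pPoly d (m+1) n x
        = (x^(n (m+1)) + 1) * pPoly d m n x + x * ∏ j ∈ Finset.Icc 2 m, (x^(n j) + 1)) ∧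
    lam' < lam :=
  stmt4_general d m hm1 n lam lam' hlam hlam'
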